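/- arXiv:1502.05079 — 4 statements merged into one kernel-verified Lean document; each statement's English description precedes it below -/
import Mathlib

section
/- Let T be a triangulated category with countable direct sums, and let X_0 → X_1 → X_2 → ⋯ be a sequence of morphisms in T with X_0 compact. If the homotopy colimit of the sequence is a zero object, then there exists a natural number a such that the composite morphism X_0 → X_a is zero. (The key step in the proof of Theorem 4.1 of the paper.) -/
/-!
If the cone of `1 - σ` vanishes, `1 - σ` is invertible, so the inclusion `ι₀ : X₀ ⟶ ∐ X` lifts
through it to some `φ`. Compactness of `X₀` writes `φ` as a finite sum of components
`dᵢ : X₀ ⟶ Xᵢ`, and injectivity of the same comparison map turns `φ ≫ (1 - σ) = ι₀` into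
`d₀ = 𝟙` and `dᵢ₊₁ = dᵢ ≫ sᵢ`: each `dᵢ` is the composite `X₀ ⟶ Xᵢ`. As only finitely many
`dᵢ` are nonzero, some composite vanishes.
-/

open CategoryTheory CategoryTheory.Limits CategoryTheory.Pretriangulated

universe v u

variable {C : Type u} [Category.{v} C] [HasZeroObject C] [HasShift C ℤ]
  [Preadditive C] [∀ n : ℤ, (shiftFunctor C n).Additive] [Pretriangulated C]

/-- An object `N` of a triangulated category is compact if for every family of objects
`(X_i)` (whose coproduct exists), the canonical map
`⊕_i Hom(N, X_i) → Hom(N, ⊕_i X_i)` is bijective. -/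
def IsCompactObj (N : C) : Prop :=
  ∀ ⦃I : Type v⦄ (X : I → C) [HasCoproduct X],
    letI := Classical.decEq I
    Function.Bijective
      (DirectSum.toAddMonoid
        (fun i => AddMonoidHom.mk' (fun g : N ⟶ X i => g ≫ Sigma.ι X i)
          (fun _ _ => Preadditive.add_comp _ _ _ _ _ _)) :
        DirectSum I (fun i => N ⟶ X i) →+ (N ⟶ ∐ X))

/-- The composite `X 0 ⟶ X a` of the morphisms `s 0, …, s (a-1)`. -/
def compositeUpTo (X : ℕ → C) (s : ∀ n, X n ⟶ X (n + 1)) : ∀ a, (X 0 ⟶ X a)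
  | 0 => 𝟙 _
  | a + 1 => compositeUpTo X s a ≫ s a

open DirectSum

section Preadditive

variable {A : Type*} [Category.{v} A] [Preadditive A]

section

variable {I : Type*} [DecidableEq I]

noncomputable def homToSigma (N : A) (X : I → A) [HasCoproduct X] :
    (⨁ i, N ⟶ X i) →+ (N ⟶ ∐ X) :=
  toAddMonoid fun i => Preadditive.rightComp N (Sigma.ι X i)

@[simp]
lemma homToSigma_of (N : A) (X : I → A) [HasCoproduct X] (i : I) (f : N ⟶ X i) :
    homToSigma N X (of _ i f) = f ≫ Sigma.ι X i :=
  toAddMonoid_of _ _ _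

end

section Sequence

variable {X : ℕ → A} (s : ∀ n, X n ⟶ X (n + 1))

noncomputable def sigmaShift [HasCoproduct X] : ∐ X ⟶ ∐ X :=
  Sigma.desc fun i => s i ≫ Sigma.ι X (i + 1)

def homShift (N : A) : (⨁ i, N ⟶ X i) →+ (⨁ i, N ⟶ X i) :=
  toAddMonoid fun i => (of (fun i => N ⟶ X i) (i + 1)).comp (Preadditive.rightComp N (s i))

@[simp]
lemma homShift_of (N : A) (i : ℕ) (f : N ⟶ X i) :
    homShift s N (of _ i f) = of (fun i => N ⟶ X i) (i + 1) (f ≫ s i) :=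
  toAddMonoid_of _ _ _

lemma homShift_apply_zero (N : A) (x : ⨁ i, N ⟶ X i) : homShift s N x 0 = 0 := by
  induction x using DirectSum.induction_on with
  | zero => simp
  | of i f => rw [homShift_of, of_eq_of_ne _ _ _ (by omega)]
  | add x y hx hy => rw [map_add, DirectSum.add_apply, hx, hy, add_zero]

lemma homShift_apply_succ (N : A) (x : ⨁ i, N ⟶ X i) (i : ℕ) :
    homShift s N x (i + 1) = x i ≫ s i := by
  induction x using DirectSum.induction_on with
  | zero => simp
  | of j f =>
    rw [homShift_of]
    by_cases hj : j = i
    · subst hj; simp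
    · rw [of_eq_of_ne _ _ _ (by omega), of_eq_of_ne _ _ _ (by omega), zero_comp]
  | add x y hx hy =>
    rw [map_add, DirectSum.add_apply, hx, hy, DirectSum.add_apply, Preadditive.add_comp]

lemma homToSigma_homShift [HasCoproduct X] (N : A) (x : ⨁ i, N ⟶ X i) :
    homToSigma N X (homShift s N x) = homToSigma N X x ≫ sigmaShift s := by
  induction x using DirectSum.induction_on with
  | zero => simp
  | of i f => simp [sigmaShift]
  | add x y hx hy => rw [map_add, map_add, hx, hy, map_add, Preadditive.add_comp]

end Sequence

lemma IsCompactObj.bijective_homToSigma {N : A} (hN : IsCompactObj N) {I : Type v}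
    [DecidableEq I] (X : I → A) [HasCoproduct X] : Function.Bijective (homToSigma N X) := by
  obtain rfl : ‹DecidableEq I› = Classical.decEq I := Subsingleton.elim _ _
  exact hN X

lemma IsCompactObj.bijective_homToSigma_of_equiv {N : A} (hN : IsCompactObj N) {I : Type v}
    {J : Type*} [DecidableEq I] [DecidableEq J] (e : I ≃ J) (X : J → A) [HasCoproduct X] :
    Function.Bijective (homToSigma N X) := by
  have : HasCoproduct (X ∘ e) := hasCoproduct_of_equiv_of_iso X (X ∘ e) e fun _ => Iso.refl _
  have hfactor : ⇑(homToSigma N X) ∘ (equivCongrLeft e.symm).symm =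
      (Sigma.reindex e X).homToEquiv ∘ homToSigma N (X ∘ e) := by
    suffices (homToSigma N X).comp (equivCongrLeft e.symm).symm.toAddMonoidHom =
        (Preadditive.rightComp N (Sigma.reindex e X).hom).comp (homToSigma N (X ∘ e)) from
      congrArg DFunLike.coe this
    ext i f
    have hof : (equivCongrLeft e.symm).symm (of (fun i => N ⟶ X (e i)) i f) =
        of (fun j => N ⟶ X j) (e i) f :=
      (AddEquiv.symm_apply_eq _).2 (equivCongrLeft_of (β := fun j => N ⟶ X j) e.symm i f).symm
    simp only [AddMonoidHom.comp_apply, AddEquiv.coe_toAddMonoidHom]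
    erw [hof, homToSigma_of, homToSigma_of]
    simp [Preadditive.rightComp]
  rw [← Function.Bijective.of_comp_iff _ (equivCongrLeft e.symm).symm.bijective, hfactor]
  exact (Sigma.reindex e X).homToEquiv.bijective.comp (hN.bijective_homToSigma (X ∘ e))

lemma eq_compositeUpTo_of_sub_homShift_eq {X : ℕ → A} {s : ∀ n, X n ⟶ X (n + 1)}
    {d : ⨁ i, X 0 ⟶ X i} (hd : d - homShift s (X 0) d = of (fun i => X 0 ⟶ X i) 0 (𝟙 _))
    (i : ℕ) : d i = compositeUpTo X s i := by
  induction i with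
  | zero => simpa [homShift_apply_zero, compositeUpTo] using congrArg (· 0) hd
  | succ i ih =>
    have hsucc := congrArg (· (i + 1)) hd
    rw [DirectSum.sub_apply, homShift_apply_succ, of_eq_of_ne _ _ _ (by omega)] at hsucc
    rw [compositeUpTo, ← ih, sub_eq_zero.1 hsucc]

end Preadditive

/-- Let `T` be a triangulated category with countable direct sums, and let
`X 0 ⟶ X 1 ⟶ X 2 ⟶ ⋯` be a sequence of morphisms in `T` with `X 0` compact. If the
homotopy colimit of the sequence (a cone `H` of the morphism
`1 - s : ⊕ᵢ Xᵢ → ⊕ᵢ Xᵢ`) is a zero object, then some composite `X 0 ⟶ X a` is zero. -/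
theorem composite_eq_zero_of_isZero_homotopyColimit [HasCountableCoproducts C]
    (X : ℕ → C) (s : ∀ n, X n ⟶ X (n + 1)) (hX : IsCompactObj (X 0))
    (H : C) (g : (∐ X) ⟶ H) (h : H ⟶ (∐ X)⟦(1 : ℤ)⟧)
    (hdt : Triangle.mk (𝟙 (∐ X) - Sigma.desc fun i => s i ≫ Sigma.ι X (i + 1)) g h
      ∈ distTriang C)
    (hH : IsZero H) :
    ∃ a : ℕ, compositeUpTo X s a = 0 := by
  classical
  have : IsIso (𝟙 (∐ X) - sigmaShift s) := (Triangle.isZero₃_iff_isIso₁ _ hdt).1 hH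
  have hΦ := hX.bijective_homToSigma_of_equiv Equiv.ulift X
  obtain ⟨d, hd⟩ := hΦ.2 (Sigma.ι X 0 ≫ inv (𝟙 (∐ X) - sigmaShift s))
  have hlift : homToSigma (X 0) X d ≫ (𝟙 (∐ X) - sigmaShift s) = Sigma.ι X 0 := by
    rw [hd, Category.assoc, IsIso.inv_hom_id, Category.comp_id]
  have hshift : d - homShift s (X 0) d = of (fun i => X 0 ⟶ X i) 0 (𝟙 _) := hΦ.1 <| by
    rw [map_sub, homToSigma_homShift, homToSigma_of, Category.id_comp, ← hlift,
      Preadditive.comp_sub, Category.comp_id]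
  obtain ⟨a, ha⟩ := Infinite.exists_notMem_finset (DFinsupp.support d)
  refine ⟨a, ?_⟩
  rw [← eq_compositeUpTo_of_sub_homShift_eq hshift, DFinsupp.notMem_support_iff.1 ha]
end

section
/- Let R be a commutative noetherian ring and M an R-module that is not finitely generated. Then the canonical R-module map (∏_{m∈ℕ} R) ⊗_R M → ∏_{m∈ℕ} M is not surjective. (The concluding argument of the proof of Theorem 5.1 of the paper.) -/
open TensorProduct

/-- The canonical `R`-linear map `(∏_{m ∈ ℕ} R) ⊗_R M → ∏_{m ∈ ℕ} M`,
sending `(a_m)_m ⊗ x` to the sequence `(a_m • x)_m`. -/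
noncomputable def canonicalProdTensorMap (R : Type*) [CommRing R] (M : Type*)
    [AddCommGroup M] [Module R M] : ((ℕ → R) ⊗[R] M) →ₗ[R] (ℕ → M) :=
  TensorProduct.lift
    (LinearMap.mk₂ R (fun a x m => a m • x)
      (fun a a' x => by funext m; simp [add_smul])
      (fun c a x => by funext m; simp [mul_smul])
      (fun a x x' => by funext m; simp [smul_add])
      (fun c a x => by funext m; simp [smul_comm c]))

/-- Every element in the range of the canonical map has all its coordinates in
some finitely generated submodule. -/
lemma canonicalProdTensorMap_mem_fg (R : Type*) [CommRing R] (M : Type*)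
    [AddCommGroup M] [Module R M] (t : (ℕ → R) ⊗[R] M) :
    ∃ N : Submodule R M, N.FG ∧ ∀ m, canonicalProdTensorMap R M t m ∈ N := by
  induction t using TensorProduct.induction_on with
  | zero => exact ⟨⊥, Submodule.fg_bot, fun m => by simp⟩
  | tmul a x =>
      refine ⟨Submodule.span R {x}, Submodule.fg_span_singleton x, fun m => ?_⟩
      have : canonicalProdTensorMap R M (a ⊗ₜ x) m = a m • x := rfl
      rw [this]
      exact Submodule.smul_mem _ _ (Submodule.mem_span_singleton_self x)
  | add u v hu hv =>
      obtain ⟨N₁, hN₁, h₁⟩ := hu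
      obtain ⟨N₂, hN₂, h₂⟩ := hv
      refine ⟨N₁ ⊔ N₂, hN₁.sup hN₂, fun m => ?_⟩
      rw [map_add]
      exact Submodule.add_mem _ (Submodule.mem_sup_left (h₁ m))
        (Submodule.mem_sup_right (h₂ m))

/-- If `R` is a commutative noetherian ring and `M` is an `R`-module that is not
finitely generated, then the canonical map `(∏_{m ∈ ℕ} R) ⊗_R M → ∏_{m ∈ ℕ} M`
is not surjective. -/
theorem canonicalProdTensorMap_not_surjective (R : Type*) [CommRing R]
    [IsNoetherianRing R] (M : Type*) [AddCommGroup M] [Module R M]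
    (hM : ¬ Module.Finite R M) :
    ¬ Function.Surjective (canonicalProdTensorMap R M) := by
  classical
  intro hsurj
  have hex : ∀ N : {N : Submodule R M // N.FG}, ∃ y, y ∉ N.1 := by
    rintro ⟨N, hN⟩
    by_contra h
    push_neg at h
    have hNtop : N = ⊤ := eq_top_iff.2 fun y _ => h y
    exact hM ⟨hNtop ▸ hN⟩
  choose g hg using hex
  -- the chain of spans
  let p : ℕ → {N : Submodule R M // N.FG} := fun n =>
    Nat.rec ⟨⊥, Submodule.fg_bot⟩
      (fun _ P => ⟨P.1 ⊔ Submodule.span R {g P},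
        P.2.sup (Submodule.fg_span_singleton _)⟩) n
  let x : ℕ → M := fun n => g (p n)
  have hx_not : ∀ n, x n ∉ (p n).1 := fun n => hg (p n)
  have hx_mem : ∀ n, x n ∈ (p (n + 1)).1 :=
    fun n => Submodule.mem_sup_right (Submodule.mem_span_singleton_self _)
  have hp_le : ∀ n, (p n).1 ≤ (p (n + 1)).1 := fun n => le_sup_left
  obtain ⟨t, ht⟩ := hsurj x
  obtain ⟨N, hN, hmem⟩ := canonicalProdTensorMap_mem_fg R M t
  have hxN : ∀ m, x m ∈ N := fun m => ht ▸ hmem m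
  have hpN : ∀ n, (p n).1 ≤ N := by
    intro n
    induction n with
    | zero => exact bot_le
    | succ k ih =>
        exact sup_le ih ((Submodule.span_singleton_le_iff_mem _ _).2 (hxN k))
  haveI : IsNoetherian R N := isNoetherian_of_fg_of_noetherian N hN
  let q : ℕ →o Submodule R N :=
    ⟨fun n => (p n).1.comap N.subtype, by
      intro a b hab
      induction hab with
      | refl => exact le_rfl
      | step _ ih => exact le_trans ih (Submodule.comap_mono (hp_le _))⟩
  obtain ⟨n, hn⟩ := monotone_stabilizes_iff_noetherian.mpr inferInstance q
  have heq : q n = q (n + 1) := hn (n + 1) (Nat.le_succ n)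
  have : (⟨x n, hxN n⟩ : N) ∈ q (n + 1) := hx_mem n
  rw [← heq] at this
  exact hx_not n this
end

section
/- Let k be an algebraically closed field and let E be an elliptic curve over k (a Weierstrass curve over k with nonzero discriminant). Then for every natural number m there exists a point P in the group E(k) of k-rational points such that P has finite order and the order of P is greater than m; that is, E(k) has torsion of arbitrarily large order. (Used in the proof of Corollary 5.2 of the paper.) -/
/-!
Over an algebraically closed field, multiplication by a prime `p` is surjective on `E(k)`; so once
`E(k)` has a point of order `p`, dividing it by `p` over and over gives points of order `p ^ n` for
every `n`. We take `p = 2` unless `E` has no point of order 2, which only happens in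
characteristic 2 with `a₁ = 0`; then we take `p = 3`.

Divisibility is seen on x-coordinates. In general `x(2Q) = Φ₂(x) / Ψ₂²(x)` where `x = x(Q)`, and
since `Φ₂` and `Ψ₂²` have no common root when `Δ ≠ 0`, any root of the quartic `Φ₂ - x₀ Ψ₂²` is
the x-coordinate of a half of a point with x-coordinate `x₀`. In characteristic 2 with `a₁ = 0`
we have `Δ = a₃⁴`, `x(2Q) = x + Ψ₃(x) / a₃²` and `x(3Q) = x + a₃⁶ / Ψ₃(x)²`, so the roots of
`Ψ₃` give points of order 3 and the roots of `(X - x₀) Ψ₃² - a₃⁶` give thirds.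
-/

open Polynomial

theorem exists_addOrderOf_eq_prime_pow {G : Type*} [AddMonoid G] {p : ℕ} (hp : p.Prime)
    (hP : ∃ P : G, addOrderOf P = p) (hdiv : ∀ P : G, ∃ Q, p • Q = P) (n : ℕ) :
    ∃ P : G, addOrderOf P = p ^ (n + 1) := by
  have := Fact.mk hp
  induction n with
  | zero => simpa using hP
  | succ n ih =>
    obtain ⟨P, hP⟩ := ih
    obtain ⟨Q, rfl⟩ := hdiv P
    refine ⟨Q, addOrderOf_eq_prime_pow ?_ ?_⟩
    · rw [pow_succ, mul_nsmul']
      exact nsmul_ne_zero_of_lt_addOrderOf (pow_ne_zero _ hp.ne_zero)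
        (hP ▸ Nat.pow_lt_pow_right hp.one_lt n.lt_succ_self)
    · rw [pow_succ, mul_nsmul', ← hP, addOrderOf_nsmul_eq_zero]

namespace WeierstrassCurve

variable {R : Type*} [CommRing R] (W : WeierstrassCurve R)

lemma eval_Φ_two (x : R) :
    (W.Φ 2).eval x = x ^ 4 - W.b₄ * x ^ 2 - 2 * W.b₆ * x - W.b₈ := by
  simp [Φ_two]

lemma eval_Ψ₂Sq (x : R) :
    W.Ψ₂Sq.eval x = 4 * x ^ 3 + W.b₂ * x ^ 2 + 2 * W.b₄ * x + W.b₆ := by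
  simp [Ψ₂Sq]

lemma coeff_two_Ψ₂Sq : W.Ψ₂Sq.coeff 2 = W.b₂ := by
  rw [Ψ₂Sq]
  simp only [coeff_add, coeff_C_mul_X_pow, coeff_C_mul_X, coeff_C]
  norm_num

lemma eval_Ψ₃ (x : R) :
    W.Ψ₃.eval x = 3 * x ^ 4 + W.b₂ * x ^ 3 + 3 * W.b₄ * x ^ 2 + 3 * W.b₆ * x + W.b₈ := by
  simp [Ψ₃]

lemma Δ_eq_a₃_pow_four (h2 : (2 : R) = 0) (ha₁ : W.a₁ = 0) : W.Δ = W.a₃ ^ 4 := by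
  rw [Δ, b₂, b₄, b₆, b₈, ha₁]
  linear_combination (-8 * W.a₂ ^ 2 * (4 * W.a₂ * W.a₆ + W.a₂ * W.a₃ ^ 2 - W.a₄ ^ 2)
    - 32 * W.a₄ ^ 3 - 14 * W.a₃ ^ 4 - 108 * W.a₃ ^ 2 * W.a₆ - 216 * W.a₆ ^ 2
    + 36 * W.a₂ * W.a₄ * (W.a₃ ^ 2 + 4 * W.a₆)) * h2

lemma eval_Ψ₃_of_two_eq_zero (h2 : (2 : R) = 0) (ha₁ : W.a₁ = 0) (x : R) :
    W.Ψ₃.eval x = x ^ 4 + W.a₃ ^ 2 * x + W.a₂ * W.a₃ ^ 2 + W.a₄ ^ 2 := by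
  rw [eval_Ψ₃, b₂, b₄, b₆, b₈, ha₁]
  linear_combination (x ^ 4 + 2 * W.a₂ * x ^ 3 + 3 * W.a₄ * x ^ 2 + 6 * W.a₆ * x
    + 2 * W.a₂ * W.a₆ - W.a₄ ^ 2 + W.a₃ ^ 2 * x) * h2

lemma natDegree_Ψ₃_of_two_eq_zero [Nontrivial R] (h2 : (2 : R) = 0) : W.Ψ₃.natDegree = 4 :=
  W.natDegree_Ψ₃ fun h3 => one_ne_zero (by linear_combination h3 - h2 : (1 : R) = 0)

lemma a₃_ne_zero_of_two_eq_zero [W.IsElliptic] [Nontrivial R] (h2 : (2 : R) = 0)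
    (ha₁ : W.a₁ = 0) : W.a₃ ≠ 0 := fun ha₃ =>
  W.isUnit_Δ.ne_zero (by rw [W.Δ_eq_a₃_pow_four h2 ha₁, ha₃]; ring)

/- At `(x², 2x, 1)` the three components of `addSubMap` are `Φ₂(x)`, `Ψ₂²(x)` and `0`. -/
lemma eval_Ψ₂Sq_ne_zero_of_eval_Φ_two_eq_zero [W.IsElliptic] [IsReduced R] [Nontrivial R]
    {x : R} (hΦ : (W.Φ 2).eval x = 0) : W.Ψ₂Sq.eval x ≠ 0 := by
  intro hΨ
  apply W.addSubMap_ne_zero (x := ![x ^ 2, 2 * x, 1]) (by simp)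
  ext i
  rw [eval_Φ_two] at hΦ
  rw [eval_Ψ₂Sq] at hΨ
  fin_cases i <;>
    simp only [addSubMap, Fin.isValue, Fin.zero_eta, Fin.mk_one, Fin.reduceFinMk, Matrix.cons_val,
      Matrix.cons_val_zero, Matrix.cons_val_one, map_add, map_sub, map_mul, map_pow,
      MvPolynomial.eval_X, MvPolynomial.eval_C, mul_one, one_pow, Pi.zero_apply]
  · linear_combination hΦ
  · linear_combination hΨ
  · ring

namespace Affine

variable {F : Type*} [Field F] {W : Affine F}

variable (W) in
lemma exists_equation [IsAlgClosed F] (x : F) : ∃ y, W.Equation x y := by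
  have hdeg : (X ^ 2 + C (W.a₁ * x + W.a₃) * X
      - C (x ^ 3 + W.a₂ * x ^ 2 + W.a₄ * x + W.a₆)).degree = 2 := by
    compute_degree!
  obtain ⟨y, hy⟩ := IsAlgClosed.exists_root _ (by rw [hdeg]; norm_num)
  refine ⟨y, (W.equation_iff x y).mpr ?_⟩
  simp only [IsRoot.def, eval_add, eval_sub, eval_mul, eval_pow, eval_C, eval_X] at hy
  linear_combination hy

variable (W) in
lemma exists_isRoot_Ψ₂Sq_or [IsAlgClosed F] :
    (∃ s, W.Ψ₂Sq.IsRoot s) ∨ ((2 : F) = 0 ∧ W.a₁ = 0) := by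
  by_cases h : (2 : F) = 0 ∧ W.a₁ = 0
  · exact .inr h
  refine .inl (IsAlgClosed.exists_root _ (natDegree_pos_iff_degree_pos.mp ?_).ne')
  by_cases h4 : (4 : F) = 0
  · have h2 : (2 : F) = 0 := pow_eq_zero_iff two_ne_zero |>.mp (by linear_combination h4)
    have hb₂ : W.Ψ₂Sq.coeff 2 ≠ 0 := by
      rw [coeff_two_Ψ₂Sq, b₂, h4, zero_mul, add_zero]
      exact pow_ne_zero 2 fun ha₁ => h ⟨h2, ha₁⟩
    exact lt_of_lt_of_le two_pos (le_natDegree_of_ne_zero hb₂)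
  · exact W.natDegree_Ψ₂Sq_pos h4

lemma eval_Ψ₂Sq_eq_sq {x y : F} (h : W.Equation x y) :
    W.Ψ₂Sq.eval x = (y - W.negY x y) ^ 2 := by
  rw [equation_iff] at h
  rw [eval_Ψ₂Sq, negY, b₂, b₄, b₆]
  linear_combination -4 * h

lemma sub_negY_of_two_eq_zero (h2 : (2 : F) = 0) (ha₁ : W.a₁ = 0) (x y : F) :
    y - W.negY x y = W.a₃ := by
  rw [negY, ha₁]
  linear_combination y * h2

lemma addX_addX_sub_mul (h2 : (2 : F) = 0) (ha₁ : W.a₁ = 0) {x y L M : F}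
    (hM : M * (W.addX x x L - x) = W.addY x x y L - y) :
    (W.addX (W.addX x x L) x M - x) * (W.addX x x L - x) ^ 2 = W.a₃ ^ 2 := by
  simp only [addX, addY, negAddY, negY, ha₁, zero_mul, add_zero, sub_zero] at hM ⊢
  linear_combination (L ^ 2 * M - L ^ 3 - 2 * y - 3 * x * M + 3 * x * L - W.a₃ - W.a₂ * M
      + W.a₂ * L) * hM
    + (2 * y * L ^ 3 + 2 * y ^ 2 - 6 * x * y * L + W.a₃ * L ^ 3 + 2 * W.a₃ * y - 3 * W.a₃ * x * L
      - 2 * W.a₂ * y * L - W.a₂ * W.a₃ * L) * h2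

variable [DecidableEq F]

lemma addX_slope_self_mul_eval_Ψ₂Sq {x y : F} (h : W.Equation x y) (hy : y ≠ W.negY x y) :
    W.addX x x (W.slope x x y y) * W.Ψ₂Sq.eval x = (W.Φ 2).eval x := by
  have hL : W.slope x x y y * (y - W.negY x y)
      = 3 * x ^ 2 + 2 * W.a₂ * x + W.a₄ - W.a₁ * y := by
    rw [slope_of_Y_ne rfl hy]
    exact div_mul_cancel₀ _ (sub_ne_zero.mpr hy)
  set L := W.slope x x y y
  rw [equation_iff] at h
  rw [negY] at hL
  rw [eval_Ψ₂Sq, eval_Φ_two, addX, b₂, b₄, b₆, b₈]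
  linear_combination (2 * y * L + 3 * x ^ 2 + W.a₄ + W.a₃ * L + 2 * W.a₂ * x + W.a₁ * y
      + W.a₁ * x * L + W.a₁ * W.a₃ + W.a₁ ^ 2 * x) * hL
    - (4 * L ^ 2 + 4 * W.a₁ * L + W.a₁ ^ 2) * h

lemma addX_slope_self_sub_mul (h2 : (2 : F) = 0) (ha₁ : W.a₁ = 0) (ha₃ : W.a₃ ≠ 0) (x y : F) :
    (W.addX x x (W.slope x x y y) - x) * W.a₃ ^ 2 = W.Ψ₃.eval x := by
  have hy := sub_negY_of_two_eq_zero h2 ha₁ x y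
  rw [slope_of_Y_ne rfl (sub_ne_zero.mp (hy ▸ ha₃)), hy, addX,
    eval_Ψ₃_of_two_eq_zero W h2 ha₁, ha₁]
  field_simp
  linear_combination (4 * x ^ 4 + 6 * W.a₂ * x ^ 3 + 2 * W.a₂ ^ 2 * x ^ 2 + 3 * W.a₄ * x ^ 2
    + 2 * W.a₂ * W.a₄ * x - 2 * W.a₃ ^ 2 * x - W.a₂ * W.a₃ ^ 2) * h2

lemma Point.exists_nsmul_eq_of_xRep_eq {n : ℕ} {P Q : W.Point} (h : (n • Q).xRep = P.xRep) :
    ∃ Q' : W.Point, n • Q' = P := by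
  rcases Point.eq_or_eq_neg_of_xRep_eq_xRep h with h | h
  · exact ⟨Q, h⟩
  · exact ⟨-Q, by rw [neg_nsmul, h, neg_neg]⟩

lemma exists_xRep_three_nsmul_some (h2 : (2 : F) = 0) (ha₁ : W.a₁ = 0) (ha₃ : W.a₃ ≠ 0)
    {x y : F} (h : W.Nonsingular x y) (hΨ : W.Ψ₃.eval x ≠ 0) :
    ∃ x₃, (3 • Point.some x y h).xRep = ![x₃, 1] ∧ (x₃ - x) * W.Ψ₃.eval x ^ 2 = W.a₃ ^ 6 := by
  have hy : y ≠ W.negY x y := sub_ne_zero.mp (sub_negY_of_two_eq_zero h2 ha₁ x y ▸ ha₃)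
  have hx₂ := addX_slope_self_sub_mul h2 ha₁ ha₃ x y
  set x₂ := W.addX x x (W.slope x x y y)
  have hne : x₂ ≠ x := fun he => hΨ (by rw [← hx₂, he, sub_self, zero_mul])
  have h₂ := nonsingular_add h h fun hxy => hy hxy.2
  have h3 : 3 • Point.some x y h = .some _ _ (nonsingular_add h₂ h fun hxy => hne hxy.1) := by
    rw [show 3 = 2 + 1 from rfl, add_nsmul, one_nsmul, two_nsmul, Point.add_self_of_Y_ne hy,
      Point.add_of_X_ne hne]
  refine ⟨_, by rw [h3, Point.xRep_some], ?_⟩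
  have hM : W.slope x₂ x (W.addY x x y (W.slope x x y y)) y * (x₂ - x)
      = W.addY x x y (W.slope x x y y) - y := by
    rw [slope_of_X_ne hne]
    exact div_mul_cancel₀ _ (sub_ne_zero.mpr hne)
  rw [← hx₂]
  linear_combination W.a₃ ^ 4 * addX_addX_sub_mul h2 ha₁ hM

variable [IsAlgClosed F] [W.IsElliptic]

lemma exists_two_nsmul_eq (P : W.Point) : ∃ Q : W.Point, 2 • Q = P := by
  rcases P with _ | @⟨x₀, y₀, h₀⟩
  · exact ⟨0, nsmul_zero 2⟩
  have hdeg : (W.Φ 2 - C x₀ * W.Ψ₂Sq).degree = 4 := by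
    rw [Φ_two, Ψ₂Sq]
    compute_degree!
  obtain ⟨x, hx⟩ := IsAlgClosed.exists_root (W.Φ 2 - C x₀ * W.Ψ₂Sq) (by rw [hdeg]; norm_num)
  rw [IsRoot.def, eval_sub, eval_mul, eval_C, sub_eq_zero] at hx
  have hΨ : W.Ψ₂Sq.eval x ≠ 0 := fun hΨ =>
    W.eval_Ψ₂Sq_ne_zero_of_eval_Φ_two_eq_zero (by rw [hx, hΨ, mul_zero]) hΨ
  obtain ⟨y, h⟩ := W.exists_equation x
  have hy : y ≠ W.negY x y := fun hy =>
    hΨ (by rw [eval_Ψ₂Sq_eq_sq h, sub_eq_zero.mpr hy, sq, mul_zero])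
  have hx₀ : W.addX x x (W.slope x x y y) = x₀ :=
    mul_right_cancel₀ hΨ (by rw [addX_slope_self_mul_eval_Ψ₂Sq h hy, hx])
  refine Point.exists_nsmul_eq_of_xRep_eq (Q := .some _ _ (equation_iff_nonsingular.mp h)) ?_
  rw [two_nsmul, Point.add_self_of_Y_ne hy, Point.xRep_some, Point.xRep_some, hx₀]

lemma exists_addOrderOf_eq_two {s : F} (hs : W.Ψ₂Sq.IsRoot s) :
    ∃ P : W.Point, addOrderOf P = 2 := by
  have := Fact.mk Nat.prime_two
  obtain ⟨y, h⟩ := W.exists_equation s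
  rw [IsRoot.def, eval_Ψ₂Sq_eq_sq h, sq_eq_zero_iff, sub_eq_zero] at hs
  have h' := equation_iff_nonsingular.mp h
  exact ⟨.some _ _ h', addOrderOf_eq_prime (by rw [two_nsmul, Point.add_self_of_Y_eq hs])
    (Point.some_ne_zero h')⟩

lemma exists_addOrderOf_eq_three (h2 : (2 : F) = 0) (ha₁ : W.a₁ = 0) :
    ∃ P : W.Point, addOrderOf P = 3 := by
  have := Fact.mk Nat.prime_three
  have ha₃ := W.a₃_ne_zero_of_two_eq_zero h2 ha₁
  obtain ⟨x, hx⟩ := IsAlgClosed.exists_root W.Ψ₃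
    (natDegree_pos_iff_degree_pos.mp (by rw [W.natDegree_Ψ₃_of_two_eq_zero h2]; norm_num)).ne'
  obtain ⟨y, h⟩ := W.exists_equation x
  have h' := equation_iff_nonsingular.mp h
  have hy : y ≠ W.negY x y := sub_ne_zero.mp (sub_negY_of_two_eq_zero h2 ha₁ x y ▸ ha₃)
  have hx₂ : W.addX x x (W.slope x x y y) = x := by
    have hx₂ := addX_slope_self_sub_mul h2 ha₁ ha₃ x y
    rw [hx.eq_zero, mul_eq_zero, sub_eq_zero] at hx₂
    exact hx₂.resolve_right (pow_ne_zero 2 ha₃)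
  set Q := Point.some _ _ h'
  have h2Q : 2 • Q = Q ∨ 2 • Q = -Q := by
    apply Point.eq_or_eq_neg_of_xRep_eq_xRep
    rw [two_nsmul, Point.add_self_of_Y_ne hy, Point.xRep_some, Point.xRep_some, hx₂]
  refine ⟨Q, addOrderOf_eq_prime ?_ (Point.some_ne_zero h')⟩
  rcases h2Q with h2Q | h2Q
  · exact absurd (add_eq_left.mp (two_nsmul Q ▸ h2Q)) (Point.some_ne_zero h')
  · rw [show 3 = 2 + 1 from rfl, add_nsmul, one_nsmul, h2Q, neg_add_cancel]

lemma exists_three_nsmul_eq (h2 : (2 : F) = 0) (ha₁ : W.a₁ = 0) (P : W.Point) :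
    ∃ Q : W.Point, 3 • Q = P := by
  rcases P with _ | @⟨x₀, y₀, h₀⟩
  · exact ⟨0, nsmul_zero 3⟩
  have ha₃ := W.a₃_ne_zero_of_two_eq_zero h2 ha₁
  have hΨ₃ := W.natDegree_Ψ₃_of_two_eq_zero h2
  have hdeg : 0 < ((X - C x₀) * W.Ψ₃ ^ 2).degree := by
    refine natDegree_pos_iff_degree_pos.mp ?_
    rw [natDegree_mul (X_sub_C_ne_zero x₀) (pow_ne_zero 2 (ne_zero_of_natDegree_gt (n := 0)
      (by omega))), natDegree_pow, natDegree_X_sub_C, hΨ₃]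
    norm_num
  obtain ⟨x, hx⟩ := IsAlgClosed.exists_root ((X - C x₀) * W.Ψ₃ ^ 2 - C (W.a₃ ^ 6))
    (by rw [degree_sub_C hdeg]; exact hdeg.ne')
  simp only [IsRoot.def, eval_sub, eval_mul, eval_pow, eval_X, eval_C, sub_eq_zero] at hx
  have hΨ : W.Ψ₃.eval x ≠ 0 := fun hΨ => pow_ne_zero 6 ha₃ (by rw [← hx, hΨ]; ring)
  obtain ⟨y, h⟩ := W.exists_equation x
  obtain ⟨x₃, hxRep, hx₃⟩ :=
    exists_xRep_three_nsmul_some h2 ha₁ ha₃ (equation_iff_nonsingular.mp h) hΨ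
  have hx₀ : x₃ = x₀ := mul_right_cancel₀ (pow_ne_zero 2 hΨ)
    (by linear_combination hx₃ + hx + W.a₃ ^ 6 * h2)
  exact Point.exists_nsmul_eq_of_xRep_eq (by rw [hxRep, Point.xRep_some, hx₀])

end Affine

end WeierstrassCurve

open WeierstrassCurve.Affine

open Classical in
/-- Over an algebraically closed field `k`, the group of `k`-rational points of an
elliptic curve (a Weierstrass curve with nonzero discriminant) has torsion of
arbitrarily large order: for every natural number `m` there is a point of finite
additive order greater than `m`. -/
theorem elliptic_curve_torsion_of_arbitrarily_large_order
    (k : Type*) [Field k] [IsAlgClosed k]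
    (E : WeierstrassCurve k) (hΔ : E.Δ ≠ 0) (m : ℕ) :
    ∃ P : E.toAffine.Point, IsOfFinAddOrder P ∧ m < addOrderOf P := by
  have : E.IsElliptic := ⟨hΔ.isUnit⟩
  obtain ⟨p, hp, hP, hdiv⟩ : ∃ p : ℕ, p.Prime ∧ (∃ P : E.toAffine.Point, addOrderOf P = p) ∧
      ∀ P : E.toAffine.Point, ∃ Q, p • Q = P := by
    rcases E.toAffine.exists_isRoot_Ψ₂Sq_or with ⟨s, hs⟩ | ⟨h2, ha₁⟩
    · exact ⟨2, Nat.prime_two, exists_addOrderOf_eq_two hs, exists_two_nsmul_eq⟩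
    · exact ⟨3, Nat.prime_three, exists_addOrderOf_eq_three h2 ha₁, exists_three_nsmul_eq h2 ha₁⟩
  obtain ⟨P, hPord⟩ := exists_addOrderOf_eq_prime_pow hp hP hdiv m
  refine ⟨P, addOrderOf_pos_iff.mp (hPord ▸ pow_pos hp.pos _), hPord ▸ ?_⟩
  calc m < p ^ m := Nat.lt_pow_self hp.one_lt
    _ ≤ p ^ (m + 1) := Nat.pow_le_pow_right hp.pos m.le_succ
end

section
/- Let k be a field that is not an algebraic extension of a finite field; that is, either k has characteristic zero, or k has characteristic p > 0 and contains an element that is transcendental over the prime field F_p. Then the ℚ-vector space k^× ⊗_ℤ ℚ is infinite-dimensional. (Used in the proofs of Theorem 7.1 and Theorem 8.2 of the paper.) -/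
open TensorProduct

theorem aux_indep {R k : Type*} [CommRing R] [IsDomain R] [Field k] {ι : Type*}
    (φ : R →+* k) (hφ : Function.Injective φ) (p : ι → R) (hp : ∀ i, Prime (p i))
    (hass : ∀ i j, Associated (p i) (p j) → i = j)
    (u : ι → kˣ) (hu : ∀ i, (u i : k) = φ (p i)) :
    LinearIndependent ℤ (fun i => Additive.ofMul (u i)) := by
  rw [linearIndependent_iff']
  intro t g hg j hj
  have hprod : (∏ i ∈ t, u i ^ g i) = 1 := by
    have h2 := congrArg Additive.toMul hg
    simpa using h2
  -- pass to k
  have hk : (∏ i ∈ t, (φ (p i)) ^ g i) = 1 := by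
    have := congrArg (Units.coeHom k) hprod
    simpa [hu] using this
  -- split into nonnegative parts
  set a : ι → ℕ := fun i => (g i).toNat with ha
  set b : ι → ℕ := fun i => (-g i).toNat with hb
  have hφne : ∀ i, φ (p i) ≠ 0 := fun i => fun h0 => (hp i).ne_zero (hφ (by simpa using h0))
  have key : (∏ i ∈ t, (p i) ^ a i) = ∏ i ∈ t, (p i) ^ b i := by
    apply hφ
    rw [map_prod, map_prod]
    have : ∀ i ∈ t, (φ (p i)) ^ g i = (φ (p i)) ^ a i / (φ (p i)) ^ b i := by
      intro i _
      rcases le_or_gt 0 (g i) with h | h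
      · rw [ha, hb]
        simp only [Int.toNat_of_nonneg h, Int.toNat_of_nonpos (by omega : -g i ≤ 0)]
        rw [pow_zero, div_one, ← zpow_natCast, Int.toNat_of_nonneg h]
      · rw [ha, hb]
        simp only [Int.toNat_of_nonpos (le_of_lt h), Int.toNat_of_nonneg (by omega : 0 ≤ -g i)]
        rw [pow_zero, one_div, ← zpow_natCast, Int.toNat_of_nonneg (by omega : (0:ℤ) ≤ -g i),
          ← zpow_neg, neg_neg]
    rw [Finset.prod_congr rfl this, Finset.prod_div_distrib] at hk
    have h2 : (∏ i ∈ t, (φ (p i)) ^ b i) ≠ 0 := by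
      apply Finset.prod_ne_zero_iff.2
      intro i _; exact pow_ne_zero _ (hφne i)
    field_simp at hk
    simpa [map_pow] using hk
  -- now the divisibility argument
  have main : ∀ c d : ι → ℕ, (∏ i ∈ t, (p i) ^ c i) = (∏ i ∈ t, (p i) ^ d i) →
      c j ≠ 0 → d j ≠ 0 := by
    intro c d hcd hcj
    have hdvd : p j ∣ ∏ i ∈ t, (p i) ^ d i := by
      rw [← hcd]
      exact dvd_trans (dvd_pow_self (p j) hcj) (Finset.dvd_prod_of_mem _ hj)
    obtain ⟨i, hi, hdi⟩ := (hp j).exists_mem_finset_dvd hdvd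
    have : p j ∣ p i := (hp j).dvd_of_dvd_pow hdi
    have hij : j = i := hass j i ((hp j).associated_of_dvd (hp i) this)
    subst hij
    intro hd0
    rw [hd0, pow_zero] at hdi
    exact (hp j).not_isUnit (isUnit_of_dvd_one hdi)
  rcases eq_or_ne (g j) 0 with h | h
  · exact h
  · exfalso
    rcases le_or_gt 0 (g j) with hle | hlt
    · have haj : a j ≠ 0 := by simp [ha]; omega
      have hbj : b j ≠ 0 := main a b key haj
      simp [hb] at hbj; omega
    · have hbj : b j ≠ 0 := by simp [hb]; omega
      have haj : a j ≠ 0 := main b a key.symm hbj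
      simp [ha] at haj; omega

theorem aux_not_fd {M : Type*} [AddCommGroup M] [Module ℤ M] {ι : Type*} [Infinite ι]
    {v : ι → M} (hv : LinearIndependent ℤ v) :
    ¬ FiniteDimensional ℚ (ℚ ⊗[ℤ] M) := by
  intro hfd
  set f : M →ₗ[ℤ] ℚ ⊗[ℤ] M := (TensorProduct.mk ℤ ℚ M) 1 with hf
  have hbc : IsBaseChange ℚ f := TensorProduct.isBaseChange ℤ M ℚ
  have : IsLocalizedModule (nonZeroDivisors ℤ) f :=
    (isLocalizedModule_iff_isBaseChange (nonZeroDivisors ℤ) ℚ f).mpr hbc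
  have hli : LinearIndependent ℚ (f ∘ v) :=
    hv.of_isLocalizedModule ℚ (nonZeroDivisors ℤ) f
  have : Finite ι := hli.finite_of_isNoetherian
  exact not_finite ι

open Polynomial in
theorem auxDeg {K : Type*} [Field K] {g : Polynomial K} (h : g ≠ 0) :
    0 < (X * g + 1 : Polynomial K).degree := by
  have h0 : (0:WithBot ℕ) ≤ g.degree := Polynomial.zero_le_degree_iff.mpr h
  have h1 : (0:WithBot ℕ) < (X * g : Polynomial K).degree := by
    rw [degree_mul, degree_X]
    exact lt_of_lt_of_le zero_lt_one (le_add_of_nonneg_right h0)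
  have h2 : (1:Polynomial K).degree < (X * g : Polynomial K).degree := by
    rw [degree_one]; exact h1
  rw [Polynomial.degree_add_eq_left_of_degree_lt h2]
  exact h1

open Polynomial Classical in
noncomputable def auxPick {K : Type*} [Field K] (g : Polynomial K) : Polynomial K :=
  if h : g = 0 then X else
    (Polynomial.exists_irreducible_of_degree_pos (auxDeg h)).choose

open Polynomial Classical in
theorem auxPick_spec {K : Type*} [Field K] (g : Polynomial K) (h : g ≠ 0) :
    Irreducible (auxPick g) ∧ auxPick g ∣ X * g + 1 := by
  rw [auxPick, dif_neg h]
  exact (Polynomial.exists_irreducible_of_degree_pos (auxDeg h)).choose_spec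

open Polynomial in
noncomputable def auxG {K : Type*} [Field K] : ℕ → Polynomial K
  | 0 => 1
  | n + 1 => auxG n * auxPick (auxG n)

noncomputable def auxP {K : Type*} [Field K] (n : ℕ) : Polynomial K := auxPick (auxG n)

open Polynomial in
theorem auxG_ne_zero {K : Type*} [Field K] (n : ℕ) : (auxG n : Polynomial K) ≠ 0 := by
  induction n with
  | zero => simp [auxG]
  | succ n ih =>
    rw [auxG]
    exact mul_ne_zero ih ((auxPick_spec _ ih).1.ne_zero)

open Polynomial in
theorem auxP_irreducible {K : Type*} [Field K] (n : ℕ) : Irreducible (auxP n : Polynomial K) :=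
  (auxPick_spec _ (auxG_ne_zero n)).1

open Polynomial in
theorem auxP_dvd {K : Type*} [Field K] (n : ℕ) :
    (auxP n : Polynomial K) ∣ X * auxG n + 1 :=
  (auxPick_spec _ (auxG_ne_zero n)).2

open Polynomial in
theorem auxP_dvd_auxG {K : Type*} [Field K] {m n : ℕ} (h : m < n) :
    (auxP m : Polynomial K) ∣ auxG n := by
  induction n with
  | zero => omega
  | succ n ih =>
    rw [auxG]
    rcases Nat.lt_succ_iff_lt_or_eq.mp h with h' | h'
    · exact (ih h').mul_right _
    · subst h'; exact Dvd.intro_left _ rfl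

open Polynomial in
theorem auxP_not_assoc {K : Type*} [Field K] {m n : ℕ}
    (h : Associated (auxP m : Polynomial K) (auxP n)) : m = n := by
  by_contra hne
  wlog hlt : m < n generalizing m n
  · exact this h.symm (Ne.symm hne) (by omega)
  have h1 : (auxP n : Polynomial K) ∣ auxG n := h.symm.dvd.trans (auxP_dvd_auxG hlt)
  have h2 : (auxP n : Polynomial K) ∣ X * auxG n + 1 := auxP_dvd n
  have h3 : (auxP n : Polynomial K) ∣ 1 := (dvd_add_right (h1.mul_left X)).mp h2
  exact (auxP_irreducible n).not_isUnit (isUnit_of_dvd_one h3)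

/-- If `k` is a field that is not an algebraic extension of a finite field —
that is, either `k` has characteristic zero, or `k` has characteristic `p > 0`
and contains an element transcendental over the prime field `F_p` — then the
`ℚ`-vector space `k^× ⊗_ℤ ℚ` is infinite-dimensional. -/
theorem units_tensor_rat_infinite_dimensional
    (k : Type*) [Field k]
    (h : CharZero k ∨ ∃ p : ℕ, p.Prime ∧ ∃ (f : ZMod p →+* k) (x : k),
      ∀ q : Polynomial (ZMod p), q ≠ 0 → Polynomial.eval₂ f x q ≠ 0) :
    ¬ FiniteDimensional ℚ (ℚ ⊗[ℤ] Additive kˣ) := by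
  rcases h with hc | ⟨p, pp, f, x, hx⟩
  · -- characteristic zero
    set φ : ℤ →+* k := Int.castRingHom k with hφdef
    have hφ : Function.Injective φ := Int.cast_injective
    set pr : Nat.Primes → ℤ := fun q => ((q : ℕ) : ℤ) with hpr
    have hune : ∀ q : Nat.Primes, ((q : ℕ) : k) ≠ 0 := fun q => by
      exact_mod_cast Nat.cast_ne_zero.mpr q.2.ne_zero
    set u : Nat.Primes → kˣ := fun q => Units.mk0 _ (hune q) with hu
    have hli := aux_indep φ hφ pr
      (fun q => Nat.prime_iff_prime_int.mp q.2)
      (fun i j hij => by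
        have := Int.associated_iff_natAbs.mp hij
        simp only [hpr, Int.natAbs_natCast] at this
        exact Subtype.ext this)
      u (fun q => by simp [hu, hpr, hφdef])
    exact aux_not_fd hli
  · -- characteristic p with transcendental x
    haveI := Fact.mk pp
    set φ : Polynomial (ZMod p) →+* k := Polynomial.eval₂RingHom f x with hφdef
    have hφ0 : ∀ q : Polynomial (ZMod p), q ≠ 0 → φ q ≠ 0 := fun q hq => by
      simpa [hφdef] using hx q hq
    have hφ : Function.Injective φ := by
      rw [injective_iff_map_eq_zero]
      intro a ha
      by_contra h0
      exact hφ0 a h0 ha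
    set u : ℕ → kˣ := fun n => Units.mk0 _ (hφ0 _ (auxP_irreducible n).ne_zero) with hu
    have hli := aux_indep φ hφ (fun n => (auxP n : Polynomial (ZMod p)))
      (fun n => (auxP_irreducible n).prime)
      (fun i j hij => auxP_not_assoc hij)
      u (fun n => by simp [hu])
    exact aux_not_fd hli
end
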